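/- arXiv:2404.02694 — 2 statements merged into one kernel-verified Lean document; each statement's English description precedes it below -/
import Mathlib

section
/- The outer angular spectrum of dimension s satisfies: {θ_s^{inf,liminf}, θ_s^{inf,limsup}, θ_s^{sup,liminf}, θ_s^{sup,limsup}} ⊆ Σ_s ⊆ [θ_s^{inf,liminf}, θ_s^{sup,limsup}]. -/
open scoped RealInnerProductSpace ENNReal
open Filter

noncomputable section

/-- `d`-dimensional Euclidean space `ℝ^d`. -/
abbrev Euc (d : ℕ) := EuclideanSpace ℝ (Fin d)

/-- Bounded linear operators on `ℝ^d` (i.e. `d × d` matrices, with the operator norm). -/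
abbrev Op (d : ℕ) := Euc d →L[ℝ] Euc d

/-- The maximal principal angle between two subspaces of `ℝ^d`,
`∠(V,W) = arccos( min_{v ∈ V, ‖v‖=1} max_{w ∈ W, ‖w‖=1} vᵀw )`. -/
def subAngle {d : ℕ} (V W : Submodule ℝ (Euc d)) : ℝ :=
  Real.arccos (sInf {x : ℝ | ∃ v ∈ V, ‖v‖ = 1 ∧
    x = sSup {y : ℝ | ∃ w ∈ W, ‖w‖ = 1 ∧ y = ⟪v, w⟫}})

/-- The solution operator `Φ(n,0) = A_{n-1} ⋯ A_0` of the system `u_{n+1} = A_n u_n`. -/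
def PhiN {d : ℕ} (A : ℕ → Euc d ≃L[ℝ] Euc d) : ℕ → Euc d ≃L[ℝ] Euc d
  | 0 => ContinuousLinearEquiv.refl ℝ (Euc d)
  | n + 1 => (PhiN A n).trans (A n)

/-- The average of principal angles between successive subspaces,
`α_n(V) = (1/n) Σ_{j=1}^n ∠(Φ(j-1,0)V, Φ(j,0)V)`. -/
def alphaAvg {d : ℕ} (A : ℕ → Euc d ≃L[ℝ] Euc d)
    (V : Submodule ℝ (Euc d)) (n : ℕ) : ℝ :=
  (n : ℝ)⁻¹ * ∑ j ∈ Finset.range n,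
    subAngle (V.map ((PhiN A j : Op d) : Euc d →ₗ[ℝ] Euc d))
      (V.map ((PhiN A (j + 1) : Op d) : Euc d →ₗ[ℝ] Euc d))

/-- Outer angular value `θ_s^{sup,limsup} = sup_{V ∈ G(s,d)} limsup_n α_n(V)`. -/
def thSupLimsup {d : ℕ} (A : ℕ → Euc d ≃L[ℝ] Euc d) (s : ℕ) : ℝ :=
  sSup {x : ℝ | ∃ V : Submodule ℝ (Euc d), Module.finrank ℝ V = s ∧
    x = limsup (alphaAvg A V) atTop}

/-- Outer angular value `θ_s^{sup,liminf} = sup_{V ∈ G(s,d)} liminf_n α_n(V)`. -/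
def thSupLiminf {d : ℕ} (A : ℕ → Euc d ≃L[ℝ] Euc d) (s : ℕ) : ℝ :=
  sSup {x : ℝ | ∃ V : Submodule ℝ (Euc d), Module.finrank ℝ V = s ∧
    x = liminf (alphaAvg A V) atTop}

/-- Outer angular value `θ_s^{inf,limsup} = inf_{V ∈ G(s,d)} limsup_n α_n(V)`. -/
def thInfLimsup {d : ℕ} (A : ℕ → Euc d ≃L[ℝ] Euc d) (s : ℕ) : ℝ :=
  sInf {x : ℝ | ∃ V : Submodule ℝ (Euc d), Module.finrank ℝ V = s ∧
    x = limsup (alphaAvg A V) atTop}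

/-- Outer angular value `θ_s^{inf,liminf} = inf_{V ∈ G(s,d)} liminf_n α_n(V)`. -/
def thInfLiminf {d : ℕ} (A : ℕ → Euc d ≃L[ℝ] Euc d) (s : ℕ) : ℝ :=
  sInf {x : ℝ | ∃ V : Submodule ℝ (Euc d), Module.finrank ℝ V = s ∧
    x = liminf (alphaAvg A V) atTop}

/-- The outer angular spectrum of dimension `s`:
`Σ_s = cl{θ ∈ [0,π/2] : ∃ V ∈ G(s,d), liminf α_n(V) ≤ θ ≤ limsup α_n(V)}`. -/
def angSpecN {d : ℕ} (A : ℕ → Euc d ≃L[ℝ] Euc d) (s : ℕ) : Set ℝ :=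
  closure {θ : ℝ | 0 ≤ θ ∧ θ ≤ Real.pi / 2 ∧
    ∃ V : Submodule ℝ (Euc d), Module.finrank ℝ V = s ∧
      liminf (alphaAvg A V) atTop ≤ θ ∧ θ ≤ limsup (alphaAvg A V) atTop}

/-! The argument is soft: every averaged angle `α_n(V)` lies in `[0, π/2]`, so for each
`V ∈ G(s,d)` the interval `[liminf α_n(V), limsup α_n(V)]` sits inside `[0, π/2]` and its
endpoints belong to `Σ_s`. The four outer angular values are infima and suprema of nonempty
bounded sets of such endpoints, hence lie in the closure `Σ_s`; conversely each such interval
lies between `θ_s^{inf,liminf}` and `θ_s^{sup,limsup}`, and so does its closure. -/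

lemma sSup_nonneg_of_forall_neg_mem {S : Set ℝ} (hS : ∀ x ∈ S, -x ∈ S) : 0 ≤ sSup S := by
  obtain rfl | ⟨x, hx⟩ := S.eq_empty_or_nonempty
  · exact Real.sSup_empty.ge
  · rcases le_total 0 x with hx0 | hx0
    · exact Real.sSup_nonneg' ⟨x, hx, hx0⟩
    · exact Real.sSup_nonneg' ⟨-x, hS x hx, neg_nonneg.2 hx0⟩

lemma le_liminf_le_limsup_le_of_mem_Icc {ι : Type*} {l : Filter ι} [l.NeBot] {f : ι → ℝ}
    {a b : ℝ} (hf : ∀ i, f i ∈ Set.Icc a b) :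
    a ≤ liminf f l ∧ liminf f l ≤ limsup f l ∧ limsup f l ≤ b := by
  have hle : IsBoundedUnder (· ≤ ·) l f := isBoundedUnder_of ⟨b, fun i => (hf i).2⟩
  have hge : IsBoundedUnder (· ≥ ·) l f := isBoundedUnder_of ⟨a, fun i => (hf i).1⟩
  exact ⟨le_liminf_of_le hle.isCoboundedUnder_ge (.of_forall fun i => (hf i).1),
    liminf_le_limsup hle hge,
    limsup_le_of_le hge.isCoboundedUnder_le (.of_forall fun i => (hf i).2)⟩

lemma exists_submodule_finrank_eq {K E : Type*} [DivisionRing K] [AddCommGroup E] [Module K E]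
    [FiniteDimensional K E] {s : ℕ} (hs : s ≤ Module.finrank K E) :
    ∃ V : Submodule K E, Module.finrank K V = s := by
  let b := Module.finBasis K E
  refine ⟨Submodule.span K (Set.range (b ∘ Fin.castLE hs)), ?_⟩
  rw [finrank_span_eq_card (b.linearIndependent.comp _ (Fin.castLE_injective hs)),
    Fintype.card_fin]

section Angles

variable {d : ℕ}

-- Each inner supremum is `≥ 0` because its set is symmetric under `w ↦ -w` (or empty, and `sSup ∅ = 0`).
lemma subAngle_mem_Icc (V W : Submodule ℝ (Euc d)) : subAngle V W ∈ Set.Icc 0 (Real.pi / 2) := by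
  refine ⟨Real.arccos_nonneg _, Real.arccos_le_pi_div_two.2 (Real.sInf_nonneg ?_)⟩
  rintro _ ⟨v, -, -, rfl⟩
  refine sSup_nonneg_of_forall_neg_mem ?_
  rintro _ ⟨w, hw, hw1, rfl⟩
  exact ⟨-w, W.neg_mem hw, by rwa [norm_neg], (inner_neg_right v w).symm⟩

variable (A : ℕ → Euc d ≃L[ℝ] Euc d) (V : Submodule ℝ (Euc d))

lemma alphaAvg_mem_Icc (n : ℕ) : alphaAvg A V n ∈ Set.Icc 0 (Real.pi / 2) := by
  have hangle := fun j => subAngle_mem_Icc (V.map ((PhiN A j : Op d) : Euc d →ₗ[ℝ] Euc d))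
    (V.map ((PhiN A (j + 1) : Op d) : Euc d →ₗ[ℝ] Euc d))
  refine ⟨mul_nonneg (by positivity) (Finset.sum_nonneg fun j _ => (hangle j).1), ?_⟩
  rcases n.eq_zero_or_pos with rfl | hn
  · simpa [alphaAvg] using Real.pi_div_two_pos.le
  rw [alphaAvg, inv_mul_le_iff₀ (by positivity)]
  calc _ ≤ ∑ _j ∈ Finset.range n, Real.pi / 2 := Finset.sum_le_sum fun j _ => (hangle j).2
    _ = n * (Real.pi / 2) := by simp

lemma liminf_limsup_alphaAvg_bounds :
    0 ≤ liminf (alphaAvg A V) atTop ∧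
      liminf (alphaAvg A V) atTop ≤ limsup (alphaAvg A V) atTop ∧
      limsup (alphaAvg A V) atTop ≤ Real.pi / 2 :=
  le_liminf_le_limsup_le_of_mem_Icc (alphaAvg_mem_Icc A V)

end Angles

theorem statement2_general {d s : ℕ} (A : ℕ → Euc d ≃L[ℝ] Euc d)
    (hsd : s ≤ d) :
    ({thInfLiminf A s, thInfLimsup A s, thSupLiminf A s, thSupLimsup A s} : Set ℝ)
        ⊆ angSpecN A s ∧
    angSpecN A s ⊆ Set.Icc (thInfLiminf A s) (thSupLimsup A s) := by
  set S := {θ : ℝ | 0 ≤ θ ∧ θ ≤ Real.pi / 2 ∧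
    ∃ V : Submodule ℝ (Euc d), Module.finrank ℝ V = s ∧
      liminf (alphaAvg A V) atTop ≤ θ ∧ θ ≤ limsup (alphaAvg A V) atTop}
  set Tinf := {x : ℝ | ∃ V : Submodule ℝ (Euc d), Module.finrank ℝ V = s ∧
    x = liminf (alphaAvg A V) atTop}
  set Tsup := {x : ℝ | ∃ V : Submodule ℝ (Euc d), Module.finrank ℝ V = s ∧
    x = limsup (alphaAvg A V) atTop}
  obtain ⟨V₀, hV₀⟩ := exists_submodule_finrank_eq (K := ℝ) (E := Euc d)
    (hsd.trans_eq finrank_euclideanSpace_fin.symm)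
  have hinf : Tinf ⊆ S := by
    rintro _ ⟨V, hV, rfl⟩
    obtain ⟨h₀, hle, h₁⟩ := liminf_limsup_alphaAvg_bounds A V
    exact ⟨h₀, hle.trans h₁, V, hV, le_rfl, hle⟩
  have hsup : Tsup ⊆ S := by
    rintro _ ⟨V, hV, rfl⟩
    obtain ⟨h₀, hle, h₁⟩ := liminf_limsup_alphaAvg_bounds A V
    exact ⟨h₀.trans hle, h₁, V, hV, hle, le_rfl⟩
  have hS : Bornology.IsBounded S := (Metric.isBounded_Icc 0 (Real.pi / 2)).subset
    fun θ hθ => ⟨hθ.1, hθ.2.1⟩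
  have hTinf : Tinf.Nonempty ∧ Bornology.IsBounded Tinf := ⟨⟨_, V₀, hV₀, rfl⟩, hS.subset hinf⟩
  have hTsup : Tsup.Nonempty ∧ Bornology.IsBounded Tsup := ⟨⟨_, V₀, hV₀, rfl⟩, hS.subset hsup⟩
  refine ⟨?_, closure_minimal ?_ isClosed_Icc⟩
  · rintro θ (rfl | rfl | rfl | rfl)
    · exact closure_mono hinf (csInf_mem_closure hTinf.1 hTinf.2.bddBelow)
    · exact closure_mono hsup (csInf_mem_closure hTsup.1 hTsup.2.bddBelow)
    · exact closure_mono hinf (csSup_mem_closure hTinf.1 hTinf.2.bddAbove)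
    · exact closure_mono hsup (csSup_mem_closure hTsup.1 hTsup.2.bddAbove)
  · rintro θ ⟨-, -, V, hV, hle, hge⟩
    exact ⟨(csInf_le hTinf.2.bddBelow ⟨V, hV, rfl⟩).trans hle,
      hge.trans (le_csSup hTsup.2.bddAbove ⟨V, hV, rfl⟩)⟩

/-- the outer angular spectrum satisfies
`{θ_s^{inf,liminf}, θ_s^{inf,limsup}, θ_s^{sup,liminf}, θ_s^{sup,limsup}} ⊆ Σ_s
⊆ [θ_s^{inf,liminf}, θ_s^{sup,limsup}]`. -/
theorem statement2 {d s : ℕ} (A : ℕ → Euc d ≃L[ℝ] Euc d)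
    (hbd : ∃ M : ℝ, ∀ n : ℕ, ‖(A n : Op d)‖ ≤ M ∧ ‖((A n).symm : Op d)‖ ≤ M)
    (hs : 1 ≤ s) (hsd : s ≤ d) :
    ({thInfLiminf A s, thInfLimsup A s, thSupLiminf A s, thSupLimsup A s} : Set ℝ)
        ⊆ angSpecN A s ∧
    angSpecN A s ⊆ Set.Icc (thInfLiminf A s) (thSupLimsup A s) :=
  statement2_general A hsd
end
end

section
/- Let 𝒱 be a set, let 𝒲 be a real normed vector space, and let b_n : 𝒱 → 𝒲 (n ∈ ℕ) be a sequence of maps that is AUap and uniformly bounded (i.e. sup_{n,V} ‖b_n(V)‖ < ∞). Then for every ε > 0 there exists N ∈ ℕ such that for all n ≥ m ≥ N, all k ∈ ℕ and all V ∈ 𝒱: ‖ (1/n) Σ_{j=1}^n b_j(V) − (1/m) Σ_{j=1}^m b_{j+k}(V) ‖ ≤ ε. -/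
/-!
Write `S_m(k) = ∑_{j<m} b_{j+k+1}(V)` and let `(P, L)` be AUap data for accuracy `δ`. Picking
`p ∈ [k, k + P]`, moving `S_m(k)` to `S_m(p)` changes only `2 (p - k) ≤ 2 P` boundary terms, and
`S_m(p) - S_m(0)` is termwise at most `δ` except for the first `L` terms; hence
`‖S_m(k) - S_m(0)‖ ≤ m η` for all large `m`, uniformly in `k` and `V`. Cutting `[0, q m)` into `q`
blocks of length `m` shows that the mean over `q m` terms is `η`-close to the mean over `m` terms,
and comparing both the mean over `n` and over `m` terms with the mean over `m n` terms gives the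
claim with `ε = 3 η`.
-/

open Finset

noncomputable section

/-- A sequence of maps `b_n : 𝒱 → 𝒲`, `n ∈ ℕ`, is asymptotically uniformly almost
periodic (AUap) w.r.t. the distance `ρ` on `𝒲`:
`∀ ε>0 ∃ P ∃ L : ∀ V ∀ ℓ ∃ p ∈ {ℓ,…,ℓ+P} : ∀ n ≥ L, ρ(b_n(V), b_{n+p}(V)) ≤ ε`. -/
def AUapSeq {V W : Type*} (ρ : W → W → ℝ) (b : ℕ → V → W) : Prop :=
  ∀ ε : ℝ, 0 < ε → ∃ P L : ℕ, 1 ≤ L ∧ ∀ v : V, ∀ l : ℕ, 1 ≤ l →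
    ∃ p : ℕ, l ≤ p ∧ p ≤ l + P ∧ ∀ n : ℕ, L ≤ n → ρ (b n v) (b (n + p) v) ≤ ε

section ShiftedSums

variable {W : Type*}

lemma sum_Icc_one_eq_sum_range [AddCommMonoid W] (f : ℕ → W) (n : ℕ) :
    ∑ j ∈ Icc 1 n, f j = ∑ j ∈ range n, f (j + 1) := by
  rw [range_eq_Ico, sum_Ico_add' f 0 n 1]
  rfl

lemma sum_range_mul_eq_sum_sum_range [AddCommMonoid W] (f : ℕ → W) (q m : ℕ) :
    ∑ j ∈ range (q * m), f j = ∑ i ∈ range q, ∑ j ∈ range m, f (j + i * m) := by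
  induction q with
  | zero => simp
  | succ q ih =>
    rw [Nat.succ_mul, sum_range_add, ih, sum_range_succ]
    simp only [add_comm (q * m)]

lemma sum_range_sub_sum_range_shift [AddCommGroup W] (g : ℕ → W) (m d : ℕ) :
    ∑ j ∈ range m, g j - ∑ j ∈ range m, g (j + d) =
      ∑ j ∈ range d, g j - ∑ j ∈ range d, g (j + m) := by
  rw [sub_eq_sub_iff_add_eq_add]
  simp only [add_comm _ m, add_comm _ d]
  rw [← sum_range_add, ← sum_range_add, add_comm]

variable [SeminormedAddCommGroup W]

lemma norm_sum_range_sub_sum_range_shift_le {g : ℕ → W} {B : ℝ} (hB : ∀ j, ‖g j‖ ≤ B)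
    (m d : ℕ) :
    ‖∑ j ∈ range m, g j - ∑ j ∈ range m, g (j + d)‖ ≤ 2 * d * B := by
  have hsum : ∀ c, ‖∑ j ∈ range d, g (j + c)‖ ≤ d * B := fun c =>
    (norm_sum_le_of_le _ fun j _ => hB (j + c)).trans_eq (by simp)
  rw [sum_range_sub_sum_range_shift]
  calc _ ≤ ‖∑ j ∈ range d, g (j + 0)‖ + ‖∑ j ∈ range d, g (j + m)‖ := norm_sub_le _ _
    _ ≤ d * B + d * B := add_le_add (hsum 0) (hsum m)
    _ = 2 * d * B := by ring

lemma norm_sum_range_sub_sum_range_shift_le_of_forall_ge {f : ℕ → W} {B δ : ℝ} {L p : ℕ}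
    (hB : ∀ j, ‖f j‖ ≤ B) (hp : ∀ n, L ≤ n → ‖f n - f (n + p)‖ ≤ δ) (m : ℕ) :
    ‖∑ j ∈ range m, f j - ∑ j ∈ range m, f (j + p)‖ ≤ m * δ + 2 * L * B := by
  have hδ : 0 ≤ δ := (norm_nonneg _).trans (hp L le_rfl)
  have hB₀ : 0 ≤ B := (norm_nonneg _).trans (hB 0)
  have hterm : ∀ j ∈ range m, ‖f j - f (j + p)‖ ≤ δ + if j < L then 2 * B else 0 := by
    intro j _
    split_ifs with hj
    · linarith [norm_sub_le (f j) (f (j + p)), hB j, hB (j + p)]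
    · simpa using hp j (not_lt.1 hj)
  calc ‖∑ j ∈ range m, f j - ∑ j ∈ range m, f (j + p)‖
      = ‖∑ j ∈ range m, (f j - f (j + p))‖ := by rw [sum_sub_distrib]
    _ ≤ ∑ j ∈ range m, (δ + if j < L then 2 * B else 0) := norm_sum_le_of_le _ hterm
    _ = m * δ + ∑ j ∈ (range m).filter (· < L), 2 * B := by
        rw [sum_add_distrib, sum_const, card_range, nsmul_eq_mul, sum_filter]
    _ ≤ m * δ + ∑ j ∈ range L, 2 * B := by
        gcongr
        intro j hj
        simp only [mem_filter, mem_range] at hj ⊢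
        exact hj.2
    _ = m * δ + 2 * L * B := by simp only [sum_const, card_range, nsmul_eq_mul]; ring

lemma norm_sum_range_shift_sub_sum_range_le {f : ℕ → W} {B δ : ℝ} {L P k p : ℕ}
    (hB : ∀ j, ‖f j‖ ≤ B) (hp : ∀ n, L ≤ n → ‖f n - f (n + p)‖ ≤ δ) (hkp : k ≤ p)
    (hpk : p ≤ k + P) (m : ℕ) :
    ‖∑ j ∈ range m, f (j + k) - ∑ j ∈ range m, f j‖ ≤ m * δ + 2 * (P + L) * B := by
  obtain ⟨d, rfl⟩ := Nat.exists_eq_add_of_le hkp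
  have hshift := norm_sum_range_sub_sum_range_shift_le (fun j => hB (j + k)) m d
  have hrest := norm_sum_range_sub_sum_range_shift_le_of_forall_ge hB hp m
  simp only [add_assoc, add_comm d k] at hshift
  have hdP : (d : ℝ) * B ≤ P * B :=
    mul_le_mul_of_nonneg_right (by exact_mod_cast (by omega : d ≤ P))
      ((norm_nonneg _).trans (hB 0))
  calc _ = ‖(∑ j ∈ range m, f (j + k) - ∑ j ∈ range m, f (j + (k + d))) -
          (∑ j ∈ range m, f j - ∑ j ∈ range m, f (j + (k + d)))‖ := by
        congr 1; abel
    _ ≤ 2 * d * B + (m * δ + 2 * L * B) := (norm_sub_le _ _).trans (add_le_add hshift hrest)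
    _ ≤ m * δ + 2 * (P + L) * B := by linarith

end ShiftedSums

section CesaroMean

variable {W : Type*} [SeminormedAddCommGroup W] [NormedSpace ℝ W]

def cesaroMean (f : ℕ → W) (n : ℕ) : W := (n : ℝ)⁻¹ • ∑ j ∈ range n, f j

lemma norm_cesaroMean_sub_cesaroMean_le {f g : ℕ → W} {m : ℕ} {η : ℝ} (hm : 0 < m)
    (h : ‖∑ j ∈ range m, f j - ∑ j ∈ range m, g j‖ ≤ m * η) :
    ‖cesaroMean f m - cesaroMean g m‖ ≤ η := by
  have hm' : (0 : ℝ) < m := by exact_mod_cast hm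
  rw [cesaroMean, cesaroMean, ← smul_sub, norm_smul, norm_inv, Real.norm_natCast,
    inv_mul_le_iff₀ hm']
  exact h

lemma norm_cesaroMean_mul_sub_le {f : ℕ → W} {q m : ℕ} {η : ℝ} (hq : 0 < q) (hm : 0 < m)
    (hshift : ∀ k, ‖∑ j ∈ range m, f (j + k) - ∑ j ∈ range m, f j‖ ≤ m * η) :
    ‖cesaroMean f (q * m) - cesaroMean f m‖ ≤ η := by
  have hqm : (0 : ℝ) < (q * m : ℕ) := by exact_mod_cast Nat.mul_pos hq hm
  have hblocks : ‖∑ j ∈ range (q * m), f j - (q : ℝ) • ∑ j ∈ range m, f j‖ ≤ q * (m * η) := by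
    have hconst : (q : ℝ) • ∑ j ∈ range m, f j = ∑ _i ∈ range q, ∑ j ∈ range m, f j := by
      rw [sum_const, card_range, Nat.cast_smul_eq_nsmul]
    rw [sum_range_mul_eq_sum_sum_range, hconst, ← sum_sub_distrib]
    exact (norm_sum_le_of_le _ fun i _ => hshift (i * m)).trans_eq (by simp)
  have hmean : cesaroMean f m = ((q * m : ℕ) : ℝ)⁻¹ • (q : ℝ) • ∑ j ∈ range m, f j := by
    have hq' : (q : ℝ) ≠ 0 := by exact_mod_cast hq.ne'
    rw [cesaroMean, smul_smul]
    congr 1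
    push_cast
    field_simp
  rw [hmean, cesaroMean, ← smul_sub, norm_smul, norm_inv, Real.norm_natCast,
    inv_mul_le_iff₀ hqm]
  exact hblocks.trans_eq (by push_cast; ring)

lemma norm_cesaroMean_sub_cesaroMean_shift_le {f : ℕ → W} {N : ℕ} {η : ℝ} (hN : 0 < N)
    (hshift : ∀ m, N ≤ m → ∀ k, ‖∑ j ∈ range m, f (j + k) - ∑ j ∈ range m, f j‖ ≤ m * η)
    {m n : ℕ} (hm : N ≤ m) (hn : N ≤ n) (k : ℕ) :
    ‖cesaroMean f n - cesaroMean (fun j => f (j + k)) m‖ ≤ 3 * η := by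
  have hm₀ : 0 < m := hN.trans_le hm
  have hn₀ : 0 < n := hN.trans_le hn
  have h₁ : ‖cesaroMean f (m * n) - cesaroMean f n‖ ≤ η :=
    norm_cesaroMean_mul_sub_le hm₀ hn₀ (hshift n hn)
  have h₂ : ‖cesaroMean f (m * n) - cesaroMean f m‖ ≤ η := by
    rw [mul_comm]; exact norm_cesaroMean_mul_sub_le hn₀ hm₀ (hshift m hm)
  have h₃ : ‖cesaroMean (fun j => f (j + k)) m - cesaroMean f m‖ ≤ η :=
    norm_cesaroMean_sub_cesaroMean_le hm₀ (hshift m hm k)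
  calc _ = ‖-(cesaroMean f (m * n) - cesaroMean f n) + (cesaroMean f (m * n) - cesaroMean f m)
        - (cesaroMean (fun j => f (j + k)) m - cesaroMean f m)‖ := by congr 1; abel
    _ ≤ η + η + η := norm_sub_le_of_le (norm_add_le_of_le (by rwa [norm_neg]) h₂) h₃
    _ = 3 * η := by ring

end CesaroMean

lemma AUapSeq.exists_norm_sum_shift_sub_le {V W : Type*} [SeminormedAddCommGroup W]
    {b : ℕ → V → W} (hb : AUapSeq (fun x y : W => ‖x - y‖) b) {B : ℝ}
    (hB : ∀ n, 1 ≤ n → ∀ v, ‖b n v‖ ≤ B) {η : ℝ} (hη : 0 < η) :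
    ∃ N : ℕ, 1 ≤ N ∧ ∀ m, N ≤ m → ∀ k v,
      ‖∑ j ∈ range m, b (j + k + 1) v - ∑ j ∈ range m, b (j + 1) v‖ ≤ m * η := by
  obtain ⟨P, L, -, hPL⟩ := hb (η / 2) (half_pos hη)
  obtain ⟨N, hN⟩ := exists_nat_ge (4 * (P + L) * B / η)
  refine ⟨max N 1, le_max_right _ _, fun m hm k v => ?_⟩
  rcases k.eq_zero_or_pos with rfl | hk
  · simpa using by positivity
  obtain ⟨p, hkp, hpk, hp⟩ := hPL v k hk
  have hmN : 4 * (P + L) * B ≤ m * η := by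
    rw [div_le_iff₀ hη] at hN
    nlinarith [(by exact_mod_cast (le_max_left N 1).trans hm : (N : ℝ) ≤ m)]
  have hp' : ∀ n, L ≤ n → ‖b (n + 1) v - b (n + p + 1) v‖ ≤ η / 2 := fun n hn => by
    simpa only [Nat.add_right_comm n 1 p] using hp (n + 1) (by omega)
  refine (norm_sum_range_shift_sub_sum_range_le (f := fun j => b (j + 1) v)
    (fun j => hB _ j.succ_pos v) hp' hkp hpk m).trans ?_
  linarith [mul_div_assoc' (m : ℝ) η 2]

/-- if `b_n : 𝒱 → 𝒲` (𝒲 a real normed space) is AUap and uniformly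
bounded, then the averages satisfy a uniform Cauchy property:
`∀ ε>0 ∃ N ∀ n ≥ m ≥ N ∀ k ∀ V : ‖(1/n)Σ_{j=1}^n b_j(V) − (1/m)Σ_{j=1}^m b_{j+k}(V)‖ ≤ ε`. -/
theorem statement17 {V : Type*} {W : Type*}
    [NormedAddCommGroup W] [NormedSpace ℝ W]
    (b : ℕ → V → W)
    (hAUap : AUapSeq (fun x y : W => ‖x - y‖) b)
    (hbd : ∃ B : ℝ, ∀ n : ℕ, 1 ≤ n → ∀ v : V, ‖b n v‖ ≤ B) :
    ∀ ε : ℝ, 0 < ε → ∃ N : ℕ, 1 ≤ N ∧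
      ∀ n m : ℕ, N ≤ m → m ≤ n → ∀ k : ℕ, 1 ≤ k → ∀ v : V,
        ‖(n : ℝ)⁻¹ • ∑ j ∈ Finset.Icc 1 n, b j v -
          (m : ℝ)⁻¹ • ∑ j ∈ Finset.Icc 1 m, b (j + k) v‖ ≤ ε := by
  intro ε hε
  obtain ⟨B, hB⟩ := hbd
  obtain ⟨N, hN, hshift⟩ := hAUap.exists_norm_sum_shift_sub_le hB (div_pos hε three_pos)
  refine ⟨N, hN, fun n m hm hmn k _ v => ?_⟩
  have key := norm_cesaroMean_sub_cesaroMean_shift_le (f := fun j => b (j + 1) v) hN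
    (fun m hm k => hshift m hm k v) hm (hm.trans hmn) k
  rw [mul_div_cancel₀ ε three_ne_zero] at key
  simpa only [cesaroMean, sum_Icc_one_eq_sum_range, Nat.add_right_comm _ 1 k] using key
end
end
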